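/- Let g : ℝ^m × Θ → ℝ be such that for all θ, θ' ∈ Θ: (i) g(·, θ) has a maximizer U*(θ) satisfying the second-order growth condition g(U*(θ), θ) − g(U, θ) ≥ c_u ||U − U*(θ)||² for all feasible U; and (ii) |[g(U*(θ̂), θ̂) − g(U*(θ̂), θ)] − [g(U*(θ), θ̂) − g(U*(θ), θ)]| ≤ κ ||θ̂ − θ|| · ||U*(θ̂) − U*(θ)||. Then ||U*(θ̂) − U*(θ)|| ≤ (κ/c_u) ||θ̂ − θ||. -/
import Mathlib

/-- Lipschitzian stability of optimal solutions of parametric optimization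
(Bonnans–Shapiro Prop. 4.32, maximization form): if each `U*(θ)` is a
maximizer of `g(·, θ)` over the fixed feasible set `F` satisfying a
second-order growth condition with constant `c_u > 0`, and the difference
function satisfies the Lipschitz-type bound with constant `κ`, then
`‖U*(θ̂) − U*(θ)‖ ≤ (κ/c_u)·‖θ̂ − θ‖`. -/
theorem lipschitzian_stability_of_maximizers
    {m p : ℕ} (Θ : Set (EuclideanSpace ℝ (Fin p)))
    (F : Set (EuclideanSpace ℝ (Fin m)))
    (g : EuclideanSpace ℝ (Fin m) → EuclideanSpace ℝ (Fin p) → ℝ)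
    (Ustar : EuclideanSpace ℝ (Fin p) → EuclideanSpace ℝ (Fin m))
    (cu κ : ℝ) (hcu : 0 < cu) (hκ : 0 ≤ κ)
    (hfeas : ∀ θ ∈ Θ, Ustar θ ∈ F)
    (hgrowth : ∀ θ ∈ Θ, ∀ U ∈ F,
      cu * ‖U - Ustar θ‖ ^ 2 ≤ g (Ustar θ) θ - g U θ)
    (hdiff : ∀ θhat ∈ Θ, ∀ θ ∈ Θ,
      |(g (Ustar θhat) θhat - g (Ustar θhat) θ) -
        (g (Ustar θ) θhat - g (Ustar θ) θ)| ≤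
          κ * ‖θhat - θ‖ * ‖Ustar θhat - Ustar θ‖) :
    ∀ θhat ∈ Θ, ∀ θ ∈ Θ,
      ‖Ustar θhat - Ustar θ‖ ≤ (κ / cu) * ‖θhat - θ‖ := by
  intro θhat hθhat θ hθ
  set d : ℝ := ‖Ustar θhat - Ustar θ‖ with hd
  have hd0 : 0 ≤ d := norm_nonneg _
  rcases eq_or_lt_of_le hd0 with h0 | hpos
  · rw [← h0]
    positivity
  · have h1 := hgrowth θ hθ (Ustar θhat) (hfeas θhat hθhat)
    have h2 := hgrowth θhat hθhat (Ustar θ) (hfeas θ hθ)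
    have hsym : ‖Ustar θ - Ustar θhat‖ = d := norm_sub_rev _ _
    rw [hsym] at h2
    have hsum : cu * d ^ 2 ≤
        (g (Ustar θhat) θhat - g (Ustar θhat) θ) -
          (g (Ustar θ) θhat - g (Ustar θ) θ) := by nlinarith
    have h3 := le_trans hsum (le_trans (le_abs_self _) (hdiff θhat hθhat θ hθ))
    rw [div_mul_eq_mul_div, le_div_iff₀ hcu]
    nlinarith
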